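/- Let G = (V,E) be a graph and v ∈ V a pendant vertex (a vertex of degree 1). Then γ_sp(G) − 1 ≤ γ_sp(G/v) ≤ γ_sp(G). -/
import Mathlib


open SimpleGraph

/-- A super dominating set: a dominating set `S` such that every vertex `u ∉ S`
has a private "super" dominator `v ∈ S` with `N(v) ∩ (V \ S) = {u}`. -/
def IsSuperDominatingSet {V : Type*} (G : SimpleGraph V) (S : Finset V) : Prop :=
  (∀ u ∉ S, ∃ v ∈ S, G.Adj v u) ∧
  (∀ u ∉ S, ∃ v ∈ S, ∀ w, (G.Adj v w ∧ w ∉ S) ↔ w = u)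

/-- The super domination number: minimum size of a super dominating set. -/
noncomputable def superDominationNumber {V : Type*} (G : SimpleGraph V) : ℕ :=
  sInf {n | ∃ S : Finset V, IsSuperDominatingSet G S ∧ S.card = n}

/-- Edge contraction of the edge `uv`: `v` is deleted and `u` plays the role of the merged
vertex, adjacent to all former neighbours of `u` or `v`. -/
def contractEdge {V : Type*} (G : SimpleGraph V) (u v : V) : SimpleGraph {x : V // x ≠ v} :=
  SimpleGraph.fromRel (fun a b => G.Adj a.val b.val ∨ (a.val = u ∧ G.Adj v b.val))

/-- Vertex deletion. -/
def deleteVertex {V : Type*} (G : SimpleGraph V) (v : V) : SimpleGraph {x : V // x ≠ v} :=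
  G.induce {x : V | x ≠ v}

/-- Vertex contraction: delete `v` and make its open neighbourhood a clique. -/
def contractVertex {V : Type*} (G : SimpleGraph V) (v : V) : SimpleGraph {x : V // x ≠ v} :=
  SimpleGraph.fromRel (fun a b => G.Adj a.val b.val ∨ (G.Adj v a.val ∧ G.Adj v b.val))


lemma univ_isSuperDominating {V : Type*} [Fintype V] (G : SimpleGraph V) :
    IsSuperDominatingSet G Finset.univ :=
  ⟨fun u hu => absurd (Finset.mem_univ u) hu, fun u hu => absurd (Finset.mem_univ u) hu⟩

lemma sdn_exists {V : Type*} [Fintype V] (G : SimpleGraph V) :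
    ∃ S : Finset V, IsSuperDominatingSet G S ∧ S.card = superDominationNumber G := by
  have hne : {n | ∃ S : Finset V, IsSuperDominatingSet G S ∧ S.card = n}.Nonempty :=
    ⟨Finset.univ.card, Finset.univ, univ_isSuperDominating G, rfl⟩
  exact Nat.sInf_mem hne

lemma sdn_le {V : Type*} [Fintype V] (G : SimpleGraph V) (S : Finset V)
    (h : IsSuperDominatingSet G S) : superDominationNumber G ≤ S.card :=
  Nat.sInf_le ⟨S, h, rfl⟩

/-- If `v` is a pendant vertex of `G`, then `γ_sp(G) - 1 ≤ γ_sp(G/v) ≤ γ_sp(G)`. -/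
theorem stmt15 {V : Type*} [Fintype V] (G : SimpleGraph V) (v : V)
    (hv : (G.neighborSet v).ncard = 1) :
    superDominationNumber G - 1 ≤ superDominationNumber (contractVertex G v) ∧
    superDominationNumber (contractVertex G v) ≤ superDominationNumber G := by

  classical
  obtain ⟨u, hu⟩ : ∃ u, G.neighborSet v = {u} := Set.ncard_eq_one.mp hv
  have hAdjvu : G.Adj v u := by
    have : u ∈ G.neighborSet v := hu ▸ rfl
    exact this
  have hnb : ∀ w, G.Adj v w → w = u := by
    intro w hw
    have : w ∈ G.neighborSet v := hw
    rw [hu] at this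
    exact this
  have huv : u ≠ v := fun h => G.irrefl (h ▸ hAdjvu)
  have hadj : ∀ a b : {x : V // x ≠ v}, (contractVertex G v).Adj a b ↔ G.Adj a.val b.val := by
    intro a b
    constructor
    · rintro ⟨hne, (h | ⟨h1, h2⟩) | (h | ⟨h1, h2⟩)⟩
      · exact h
      · exact absurd (Subtype.ext ((hnb _ h1).trans (hnb _ h2).symm)) hne
      · exact h.symm
      · exact absurd (Subtype.ext ((hnb _ h2).trans (hnb _ h1).symm)) hne
    · intro h
      exact ⟨fun he => G.irrefl (by rwa [he] at h), Or.inl (Or.inl h)⟩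
  constructor
  · -- γ_sp(G) - 1 ≤ γ_sp(G/v)
    obtain ⟨S', hS', hcard'⟩ := sdn_exists (contractVertex G v)
    set S : Finset V := insert v (S'.image Subtype.val) with hSdef
    have hmem : ∀ x : V, x ∈ S ↔ x = v ∨ ∃ hx : x ≠ v, (⟨x, hx⟩ : {x : V // x ≠ v}) ∈ S' := by
      intro x
      simp only [hSdef, Finset.mem_insert, Finset.mem_image]
      constructor
      · rintro (rfl | ⟨a, ha, rfl⟩)
        · exact Or.inl rfl
        · exact Or.inr ⟨a.2, by simpa using ha⟩
      · rintro (rfl | ⟨hx, h⟩)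
        · exact Or.inl rfl
        · exact Or.inr ⟨⟨x, hx⟩, h, rfl⟩
    have hSsd : IsSuperDominatingSet G S := by
      constructor
      · intro x hx
        have hxv : x ≠ v := fun h => hx ((hmem x).mpr (Or.inl h))
        have hxS' : (⟨x, hxv⟩ : {x : V // x ≠ v}) ∉ S' := fun h => hx ((hmem x).mpr (Or.inr ⟨hxv, h⟩))
        obtain ⟨w, hwS', hw⟩ := hS'.1 _ hxS'
        exact ⟨w.val, (hmem _).mpr (Or.inr ⟨w.2, by simpa using hwS'⟩), (hadj _ _).mp hw⟩
      · intro x hx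
        have hxv : x ≠ v := fun h => hx ((hmem x).mpr (Or.inl h))
        have hxS' : (⟨x, hxv⟩ : {x : V // x ≠ v}) ∉ S' := fun h => hx ((hmem x).mpr (Or.inr ⟨hxv, h⟩))
        obtain ⟨w, hwS', hw⟩ := hS'.2 _ hxS'
        refine ⟨w.val, (hmem _).mpr (Or.inr ⟨w.2, by simpa using hwS'⟩), ?_⟩
        intro y
        constructor
        · rintro ⟨hay, hyS⟩
          have hyv : y ≠ v := fun h => hyS ((hmem y).mpr (Or.inl h))
          have hyS' : (⟨y, hyv⟩ : {x : V // x ≠ v}) ∉ S' :=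
            fun h => hyS ((hmem y).mpr (Or.inr ⟨hyv, h⟩))
          have := (hw ⟨y, hyv⟩).mp ⟨(hadj _ _).mpr hay, hyS'⟩
          exact congrArg Subtype.val this
        · rintro rfl
          have := (hw ⟨y, hxv⟩).mpr rfl
          exact ⟨(hadj _ _).mp this.1, hx⟩
    have h1 : superDominationNumber G ≤ S.card := sdn_le G S hSsd
    have h2 : S.card ≤ S'.card + 1 := by
      calc S.card ≤ (S'.image Subtype.val).card + 1 := Finset.card_insert_le _ _
        _ ≤ S'.card + 1 := by gcongr; exact Finset.card_image_le
    omega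
  · -- γ_sp(G/v) ≤ γ_sp(G)
    obtain ⟨S, hS, hcard⟩ := sdn_exists G
    set T : Finset V := insert u (S.erase v) with hTdef
    have hTcard : T.card ≤ S.card := by
      by_cases hvS : v ∈ S
      · calc T.card ≤ (S.erase v).card + 1 := Finset.card_insert_le _ _
          _ = S.card := by have := Finset.card_pos.mpr ⟨v, hvS⟩; rw [Finset.card_erase_of_mem hvS]; omega
      · have huS : u ∈ S := by
          obtain ⟨w, hwS, hw⟩ := hS.1 v hvS
          have := hnb w hw.symm
          rwa [this] at hwS
        have : T = S := by
          rw [hTdef, Finset.erase_eq_of_notMem hvS, Finset.insert_eq_of_mem huS]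
        rw [this]
    have hmemT : ∀ x : V, x ∈ T ↔ x = u ∨ (x ∈ S ∧ x ≠ v) := by
      intro x
      simp only [hTdef, Finset.mem_insert, Finset.mem_erase]
      tauto
    set S' : Finset {x : V // x ≠ v} := T.subtype (· ≠ v) with hS'def
    have hmemS' : ∀ a : {x : V // x ≠ v}, a ∈ S' ↔ a.val ∈ T := by
      intro a; simp [hS'def]
    have hS'card : S'.card ≤ T.card := by
      rw [hS'def, Finset.card_subtype]
      exact Finset.card_filter_le _ _
    have hS'sd : IsSuperDominatingSet (contractVertex G v) S' := by
      constructor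
      · intro x hx
        rw [hmemS'] at hx
        have hxu : x.val ≠ u := fun h => hx ((hmemT _).mpr (Or.inl h))
        have hxS : x.val ∉ S := fun h => hx ((hmemT _).mpr (Or.inr ⟨h, x.2⟩))
        obtain ⟨w, hwS, hw⟩ := hS.1 x.val hxS
        have hwv : w ≠ v := by
          rintro rfl
          exact hxu (hnb _ hw)
        refine ⟨⟨w, hwv⟩, (hmemS' _).mpr ((hmemT _).mpr (Or.inr ⟨hwS, hwv⟩)), ?_⟩
        exact (hadj _ _).mpr hw
      · intro x hx
        rw [hmemS'] at hx
        have hxu : x.val ≠ u := fun h => hx ((hmemT _).mpr (Or.inl h))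
        have hxS : x.val ∉ S := fun h => hx ((hmemT _).mpr (Or.inr ⟨h, x.2⟩))
        obtain ⟨w, hwS, hw⟩ := hS.2 x.val hxS
        have hwv : w ≠ v := by
          rintro rfl
          exact hxu (hnb _ ((hw x.val).mpr rfl).1)
        refine ⟨⟨w, hwv⟩, (hmemS' _).mpr ((hmemT _).mpr (Or.inr ⟨hwS, hwv⟩)), ?_⟩
        intro y
        rw [hmemS']
        constructor
        · rintro ⟨hay, hyT⟩
          have hyS : y.val ∉ S := fun h => hyT ((hmemT _).mpr (Or.inr ⟨h, y.2⟩))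
          have := (hw y.val).mp ⟨(hadj _ _).mp hay, hyS⟩
          exact Subtype.ext this
        · rintro rfl
          have := (hw y.val).mpr rfl
          exact ⟨(hadj _ _).mpr this.1, fun h => hx h⟩
    calc superDominationNumber (contractVertex G v) ≤ S'.card := sdn_le _ _ hS'sd
      _ ≤ S.card := le_trans hS'card hTcard
      _ = superDominationNumber G := hcard
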